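/- arXiv:2509.26519 — 3 statements merged into one kernel-verified Lean document; each statement's English description precedes it below -/
import Mathlib

section
/- For every nonnegative integer κ and real x, the Whittaker function satisfies M_{κ,κ+1/2}(x) = (2κ+1)! · (e^{x/2} − e^{−x/2}·e_{2κ}(x)) / x^κ, where e_j(x) = Σ_{n=0}^{j} x^n/n! is the j-th Taylor polynomial of e^x. -/
open Real

/-- The degree-`j` Taylor polynomial of the exponential function. -/
noncomputable def taylorExp (j : ℕ) (x : ℝ) : ℝ :=
  ∑ n ∈ Finset.range (j + 1), x ^ n / n.factorial

/-- The classical `M`-Whittaker function, defined via the confluent hypergeometric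
series `₁F₁(μ - κ + 1/2; 2μ + 1; x)`. -/
noncomputable def whittakerM (κ μ x : ℝ) : ℝ :=
  Real.exp (-x / 2) * x ^ (μ + 1 / 2) *
    ∑' n : ℕ, ((ascPochhammer ℝ n).eval (μ - κ + 1 / 2) /
      (ascPochhammer ℝ n).eval (2 * μ + 1)) * x ^ n / n.factorial

/-!
For `μ = κ + 1/2` the series is `₁F₁(1; m + 2; x)` with `m = 2κ`, whose terms
`(1)ₙ / (m + 2)ₙ · xⁿ / n! = (m + 1)! xⁿ / (n + m + 1)!` form `(m + 1)!` times the tail of the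
exponential series after `m + 1` terms, i.e. `(m + 1)! (eˣ - e_m(x)) / x^(m+1)`.
-/

open Nat

lemma ascPochhammer_eval_natCast_add_one {K : Type*} [Field K] [CharZero K] (m n : ℕ) :
    (ascPochhammer K n).eval ((m : K) + 1) = (m + n)! / m ! := by
  rw [← factorial_mul_ascPochhammer K m n,
    mul_div_cancel_left₀ _ (cast_ne_zero.mpr (factorial_ne_zero m))]

lemma ascPochhammer_one_div_natCast_add_one_mul_pow_div_factorial (m n : ℕ) (x : ℝ) :
    (ascPochhammer ℝ n).eval 1 / (ascPochhammer ℝ n).eval ((m : ℝ) + 1) * x ^ n / n ! =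
      m ! * (x ^ n / (n + m)!) := by
  rw [ascPochhammer_eval_one, ascPochhammer_eval_natCast_add_one, add_comm m n]
  field_simp

lemma pow_succ_mul_tsum_pow_div_factorial_add (m : ℕ) (x : ℝ) :
    x ^ (m + 1) * ∑' n : ℕ, x ^ n / (n + (m + 1))! = exp x - taylorExp m x := by
  have hexp : ∑' n : ℕ, x ^ n / n ! = exp x := by
    rw [exp_eq_exp_ℝ, NormedSpace.exp_eq_tsum_div]
  rw [← hexp, ← (summable_pow_div_factorial x).sum_add_tsum_nat_add (m + 1), taylorExp,
    add_sub_cancel_left, ← tsum_mul_left]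
  congr 1 with n
  rw [pow_add]
  ring

lemma whittakerM_natCast_add_half (κ : ℕ) (x : ℝ) :
    whittakerM κ (κ + 1 / 2) x =
      (2 * κ + 1)! * exp (-x / 2) * x ^ (κ + 1) *
        ∑' n : ℕ, x ^ n / (n + (2 * κ + 1))! := by
  have hfirst : (κ : ℝ) + 1 / 2 - κ + 1 / 2 = 1 := by ring
  have hsecond : 2 * ((κ : ℝ) + 1 / 2) + 1 = ((2 * κ + 1 : ℕ) : ℝ) + 1 := by push_cast; ring
  have hexponent : (κ : ℝ) + 1 / 2 + 1 / 2 = ((κ + 1 : ℕ) : ℝ) := by push_cast; ring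
  simp only [whittakerM, hfirst, hsecond, hexponent, rpow_natCast,
    ascPochhammer_one_div_natCast_add_one_mul_pow_div_factorial, tsum_mul_left]
  ring

theorem whittakerM_eq_general (κ : ℕ) (x : ℝ) :
    whittakerM κ (κ + 1 / 2) x =
      (2 * κ + 1).factorial *
        (Real.exp (x / 2) - Real.exp (-x / 2) * taylorExp (2 * κ) x) / x ^ κ := by
  have hexp : exp (x / 2) = exp (-x / 2) * exp x := by rw [← exp_add]; ring_nf
  rw [whittakerM_natCast_add_half, hexp, ← mul_sub, ← pow_succ_mul_tsum_pow_div_factorial_add]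
  rcases eq_or_ne x 0 with rfl | hx
  · -- both sides vanish, the right one through `0 / 0 = 0` when `κ > 0`
    simp
  · field_simp
    ring

theorem whittakerM_eq (κ : ℕ) (x : ℝ) (hx : 0 < x) :
    whittakerM κ (κ + 1 / 2) x =
      (2 * κ + 1).factorial *
        (Real.exp (x / 2) - Real.exp (-x / 2) * taylorExp (2 * κ) x) / x ^ κ :=
  whittakerM_eq_general κ x
end

section
/- The Epstein zeta value Σ over all nonzero integer pairs (c,d) of 1/(c² + cd + d²)^6 is at most 6.0099. -/
/-!
Since `4 (c² + cd + d²) = (c + 2d)² + 3c² = (2c + d)² + 3d²`, at every nonzero lattice point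
the form `Q = hexForm` dominates both `(3/4) max(1, c²)` and `(3/4) max(1, d²)`, hence
`Q⁻⁶ ≤ (4/3)⁶ max(1, c²)⁻ʲ max(1, d²)⁻ᵏ` whenever `j + k = 6`. The 81 terms with
`|c|, |d| ≤ 4` are summed exactly (just under 6.009814). Outside this box `|c| ≥ 5` or
`|d| ≥ 5`, and taking `(j, k) = (5, 1)` or `(1, 5)` bounds the remaining terms by products of
one-variable series: their sum is at most `2 (4/3)⁶ (∑_{|n| ≥ 5} n⁻¹⁰) (1 + π²/3) < 6 · 10⁻⁵`,
both series being evaluated through `ζ(2) = π²/6`.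
-/

open Real

namespace EpsteinZetaSix

noncomputable def hexForm (p : ℤ × ℤ) : ℝ :=
  (p.1 : ℝ) ^ 2 + (p.1 : ℝ) * (p.2 : ℝ) + (p.2 : ℝ) ^ 2

lemma hexForm_zero : hexForm 0 = 0 := by
  simp [hexForm]

lemma hexForm_swap (p : ℤ × ℤ) : hexForm p.swap = hexForm p := by
  unfold hexForm; simp only [Prod.fst_swap, Prod.snd_swap]; ring

lemma three_fourths_mul_sq_fst_le_hexForm (p : ℤ × ℤ) :
    3 / 4 * (p.1 : ℝ) ^ 2 ≤ hexForm p := by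
  unfold hexForm; nlinarith [sq_nonneg ((p.1 : ℝ) + 2 * p.2)]

lemma one_le_hexForm {p : ℤ × ℤ} (hp : p ≠ 0) : 1 ≤ hexForm p := by
  obtain ⟨c, d⟩ := p
  have hpos : 0 < c ^ 2 + c * d + d ^ 2 := by
    have hcd : c ≠ 0 ∨ d ≠ 0 := by
      by_contra! h; exact hp (by simp [h.1, h.2])
    rcases hcd with hc | hd
    · nlinarith [pow_pos (abs_pos.mpr hc) 2, sq_abs c, sq_nonneg (c + d), sq_nonneg d]
    · nlinarith [pow_pos (abs_pos.mpr hd) 2, sq_abs d, sq_nonneg (c + d), sq_nonneg c]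
  unfold hexForm
  exact_mod_cast hpos

lemma three_fourths_mul_max_fst_le_hexForm {p : ℤ × ℤ} (hp : p ≠ 0) :
    3 / 4 * max 1 ((p.1 : ℝ) ^ 2) ≤ hexForm p := by
  have := one_le_hexForm hp
  rw [mul_max_of_nonneg _ _ (by norm_num)]
  exact max_le (by linarith) (three_fourths_mul_sq_fst_le_hexForm p)

lemma three_fourths_mul_max_snd_le_hexForm {p : ℤ × ℤ} (hp : p ≠ 0) :
    3 / 4 * max 1 ((p.2 : ℝ) ^ 2) ≤ hexForm p := by
  have hswap : p.swap ≠ 0 := fun h => hp (by simpa using congrArg Prod.swap h)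
  simpa [hexForm_swap] using three_fourths_mul_max_fst_le_hexForm hswap

noncomputable def invSqPow (k : ℕ) (n : ℤ) : ℝ := (max 1 ((n : ℝ) ^ 2))⁻¹ ^ k

lemma invSqPow_nonneg (k : ℕ) (n : ℤ) : 0 ≤ invSqPow k n := by
  unfold invSqPow; positivity

lemma invSqPow_even (k : ℕ) : Function.Even (invSqPow k) := by
  intro n; simp [invSqPow]

lemma invSqPow_of_ne_zero (k : ℕ) {n : ℤ} (hn : n ≠ 0) :
    invSqPow k n = 1 / (n : ℝ) ^ (2 * k) := by
  have h1 : (1 : ℝ) ≤ (n : ℝ) ^ 2 := by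
    rw [one_le_sq_iff_one_le_abs, ← Int.cast_abs]
    exact_mod_cast Int.one_le_abs hn
  rw [invSqPow, max_eq_right h1, pow_mul, inv_pow, one_div]

lemma summable_invSqPow {k : ℕ} (hk : 1 ≤ k) : Summable (invSqPow k) := by
  refine (summable_one_div_int_pow.mpr (by omega : 1 < 2 * k)).congr_cofinite ?_
  filter_upwards [Filter.eventually_cofinite_ne 0] with n hn
  exact (invSqPow_of_ne_zero k hn).symm

lemma tsum_invSqPow_one : ∑' n, invSqPow 1 n = 1 + π ^ 2 / 3 := by
  rw [tsum_int_eq_zero_add_two_mul_tsum_pnat (invSqPow_even 1) (summable_invSqPow le_rfl)]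
  have hpnat : ∑' n : ℕ+, invSqPow 1 n = π ^ 2 / 6 := by
    rw [← hasSum_zeta_two.tsum_eq, ← tsum_pnat_eq_tsum_of_eq_zero (by simp)]
    refine tsum_congr fun n => ?_
    rw [invSqPow_of_ne_zero 1 (by simp)]
    simp
  rw [hpnat, show invSqPow 1 0 = 1 by simp [invSqPow], nsmul_eq_mul, Nat.cast_ofNat]
  ring

noncomputable def tailWeight (n : ℤ) : ℝ := {n : ℤ | 5 ≤ |n|}.indicator (invSqPow 5) n

lemma tailWeight_nonneg (n : ℤ) : 0 ≤ tailWeight n :=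
  Set.indicator_nonneg (fun n _ => invSqPow_nonneg 5 n) n

lemma summable_tailWeight : Summable tailWeight :=
  (summable_invSqPow (by norm_num)).indicator _

lemma tailWeight_of_five_le_abs {n : ℤ} (hn : 5 ≤ |n|) : tailWeight n = invSqPow 5 n :=
  Set.indicator_of_mem (s := {n : ℤ | 5 ≤ |n|}) hn _

lemma tsum_inv_pow_ten_add_five_le :
    ∑' n : ℕ, 1 / ((n + 5 : ℕ) : ℝ) ^ 10 ≤ (π ^ 2 / 6 - 205 / 144) / 5 ^ 8 := by
  have hzeta := (summable_one_div_nat_pow.mpr one_lt_two).sum_add_tsum_nat_add 5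
  rw [hasSum_zeta_two.tsum_eq] at hzeta
  have hhead : ∑ i ∈ Finset.range 5, 1 / (i : ℝ) ^ 2 = 205 / 144 := by
    norm_num [Finset.sum_range_succ]
  have hshift : Summable fun n : ℕ => 1 / ((n + 5 : ℕ) : ℝ) ^ 2 :=
    (summable_nat_add_iff 5).mpr (summable_one_div_nat_pow.mpr one_lt_two)
  calc ∑' n : ℕ, 1 / ((n + 5 : ℕ) : ℝ) ^ 10
      ≤ ∑' n : ℕ, 1 / ((n + 5 : ℕ) : ℝ) ^ 2 / 5 ^ 8 := by
        refine Summable.tsum_le_tsum (fun n => ?_) ?_ (hshift.div_const _)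
        · set m : ℝ := ((n + 5 : ℕ) : ℝ)
          have h5 : (5 : ℝ) ≤ m := by simp [m]
          rw [div_div]
          refine one_div_le_one_div_of_le (by positivity) ?_
          calc m ^ 2 * 5 ^ 8 ≤ m ^ 2 * m ^ 8 := by gcongr
            _ = m ^ 10 := by ring
        · exact (summable_nat_add_iff 5).mpr (summable_one_div_nat_pow.mpr (by norm_num))
    _ = (π ^ 2 / 6 - 205 / 144) / 5 ^ 8 := by
        rw [tsum_div_const]; congr 1; linarith

lemma tsum_tailWeight_le : ∑' n, tailWeight n ≤ 2 * (π ^ 2 / 6 - 205 / 144) / 5 ^ 8 := by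
  have heven : Function.Even tailWeight := by
    intro n; simp [tailWeight, Set.indicator, invSqPow_even 5 n]
  have hnat : Summable fun n : ℕ => tailWeight n :=
    summable_tailWeight.comp_injective Nat.cast_injective
  rw [tsum_int_eq_zero_add_two_mul_tsum_pnat heven summable_tailWeight,
    tsum_pnat_eq_tsum_of_eq_zero (f := fun n : ℕ => tailWeight n) (by simp [tailWeight]),
    ← hnat.sum_add_tsum_nat_add 5]
  have hzero : tailWeight 0 = 0 := by simp [tailWeight]
  have hhead : ∑ i ∈ Finset.range 5, tailWeight i = 0 := by
    simp [Finset.sum_range_succ, tailWeight]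
  have htail (n : ℕ) : tailWeight ((n + 5 : ℕ) : ℤ) = 1 / ((n + 5 : ℕ) : ℝ) ^ 10 := by
    have h5 : (5 : ℤ) ≤ |((n + 5 : ℕ) : ℤ)| := by rw [abs_of_nonneg (by positivity)]; omega
    rw [tailWeight_of_five_le_abs h5, invSqPow_of_ne_zero 5 (by omega)]
    simp
  rw [hzero, hhead, tsum_congr htail, zero_add, zero_add, nsmul_eq_mul, Nat.cast_ofNat,
    mul_div_assoc]
  gcongr
  exact tsum_inv_pow_ten_add_five_le

lemma one_div_hexForm_pow_six_le {j k : ℕ} (hjk : j + k = 6) (p : ℤ × ℤ) :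
    1 / hexForm p ^ 6 ≤ (4 / 3) ^ 6 * (invSqPow j p.1 * invSqPow k p.2) := by
  rcases eq_or_ne p 0 with rfl | hp
  · rw [hexForm_zero, zero_pow (by norm_num), div_zero]
    exact mul_nonneg (by norm_num) (mul_nonneg (invSqPow_nonneg j 0) (invSqPow_nonneg k 0))
  have ha := three_fourths_mul_max_fst_le_hexForm hp
  have hb := three_fourths_mul_max_snd_le_hexForm hp
  have hQ : 0 ≤ hexForm p := zero_le_one.trans (one_le_hexForm hp)
  have hprod : (3 / 4 * max 1 ((p.1 : ℝ) ^ 2)) ^ j * (3 / 4 * max 1 ((p.2 : ℝ) ^ 2)) ^ k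
      ≤ hexForm p ^ 6 := by
    rw [← hjk, pow_add]; gcongr
  calc 1 / hexForm p ^ 6
      ≤ 1 / ((3 / 4 * max 1 ((p.1 : ℝ) ^ 2)) ^ j * (3 / 4 * max 1 ((p.2 : ℝ) ^ 2)) ^ k) :=
        one_div_le_one_div_of_le (by positivity) hprod
    _ = (3 / 4 * max 1 ((p.1 : ℝ) ^ 2))⁻¹ ^ j * (3 / 4 * max 1 ((p.2 : ℝ) ^ 2))⁻¹ ^ k := by
        rw [one_div, mul_inv, inv_pow, inv_pow]
    _ = (4 / 3) ^ 6 * (invSqPow j p.1 * invSqPow k p.2) := by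
        rw [invSqPow, invSqPow, ← hjk, mul_inv, mul_inv, inv_div]
        ring

lemma summable_one_div_hexForm_pow_six : Summable fun p => 1 / hexForm p ^ 6 :=
  (((summable_invSqPow (k := 3) (by norm_num)).mul_of_nonneg (summable_invSqPow (by norm_num))
    (invSqPow_nonneg 3) (invSqPow_nonneg 3)).mul_left _).of_nonneg_of_le
    (fun p => by unfold hexForm; positivity) (one_div_hexForm_pow_six_le (j := 3) (k := 3) rfl)

noncomputable def box : Finset (ℤ × ℤ) := Finset.Icc (-4 : ℤ) 4 ×ˢ Finset.Icc (-4 : ℤ) 4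

lemma five_le_abs_of_notMem_box {p : ℤ × ℤ} (hp : p ∉ box) : 5 ≤ |p.1| ∨ 5 ≤ |p.2| := by
  simp only [box, Finset.mem_product, Finset.mem_Icc] at hp
  rw [le_abs', le_abs']
  omega

lemma sum_box_le : ∑ p ∈ box, 1 / hexForm p ^ 6 ≤ 6.009814 := by
  rw [box, Finset.sum_product,
    show Finset.Icc (-4 : ℤ) 4 = {-4, -3, -2, -1, 0, 1, 2, 3, 4} by decide]
  norm_num [hexForm, Finset.sum_insert]

noncomputable def tailMajorant (p : ℤ × ℤ) : ℝ :=
  (4 / 3) ^ 6 * (tailWeight p.1 * invSqPow 1 p.2 + invSqPow 1 p.1 * tailWeight p.2)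

lemma one_div_hexForm_pow_six_le_tailMajorant {p : ℤ × ℤ} (hp : p ∉ box) :
    1 / hexForm p ^ 6 ≤ tailMajorant p := by
  have h1 := invSqPow_nonneg 1 p.1
  have h2 := invSqPow_nonneg 1 p.2
  have t1 := tailWeight_nonneg p.1
  have t2 := tailWeight_nonneg p.2
  rcases five_le_abs_of_notMem_box hp with hc | hd
  · have := one_div_hexForm_pow_six_le (j := 5) (k := 1) rfl p
    rw [tailMajorant, tailWeight_of_five_le_abs hc]
    nlinarith
  · have := one_div_hexForm_pow_six_le (j := 1) (k := 5) rfl p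
    rw [tailMajorant, tailWeight_of_five_le_abs hd]
    nlinarith

lemma tailMajorant_nonneg (p : ℤ × ℤ) : 0 ≤ tailMajorant p := by
  have := invSqPow_nonneg 1 p.1
  have := invSqPow_nonneg 1 p.2
  have := tailWeight_nonneg p.1
  have := tailWeight_nonneg p.2
  unfold tailMajorant; positivity

lemma summable_tailWeight_mul_invSqPow :
    Summable fun p : ℤ × ℤ => tailWeight p.1 * invSqPow 1 p.2 :=
  summable_tailWeight.mul_of_nonneg (summable_invSqPow le_rfl) tailWeight_nonneg (invSqPow_nonneg 1)

lemma summable_invSqPow_mul_tailWeight :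
    Summable fun p : ℤ × ℤ => invSqPow 1 p.1 * tailWeight p.2 :=
  (summable_invSqPow le_rfl).mul_of_nonneg summable_tailWeight (invSqPow_nonneg 1) tailWeight_nonneg

lemma summable_tailMajorant : Summable tailMajorant :=
  (summable_tailWeight_mul_invSqPow.add summable_invSqPow_mul_tailWeight).mul_left _

lemma tsum_tailMajorant_le : ∑' p, tailMajorant p ≤ 0.0000571 := by
  have hprod₁ := summable_tailWeight.tsum_mul_tsum (summable_invSqPow le_rfl)
    summable_tailWeight_mul_invSqPow
  have hprod₂ := (summable_invSqPow le_rfl).tsum_mul_tsum summable_tailWeight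
    summable_invSqPow_mul_tailWeight
  have hv : ∑' n, tailWeight n ≤ 1.1784e-6 := by
    nlinarith [tsum_tailWeight_le, pi_lt_d2, pi_pos]
  have hw : ∑' n, invSqPow 1 n ≤ 4.3075 := by
    nlinarith [tsum_invSqPow_one, pi_lt_d2, pi_pos]
  have hv0 : 0 ≤ ∑' n, tailWeight n := tsum_nonneg tailWeight_nonneg
  have hw0 : 0 ≤ ∑' n, invSqPow 1 n := tsum_nonneg (invSqPow_nonneg 1)
  unfold tailMajorant
  rw [tsum_mul_left, summable_tailWeight_mul_invSqPow.tsum_add summable_invSqPow_mul_tailWeight,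
    ← hprod₁, ← hprod₂]
  nlinarith [mul_le_mul hv hw hw0 (by norm_num)]

end EpsteinZetaSix

open EpsteinZetaSix in
theorem epstein_zeta_six_bound :
    ∑' p : {p : ℤ × ℤ // p ≠ 0},
      (1 : ℝ) / ((p.1.1 : ℝ) ^ 2 + (p.1.1 : ℝ) * (p.1.2 : ℝ) + (p.1.2 : ℝ) ^ 2) ^ 6
      ≤ 6.0099 := by
  have hF := summable_one_div_hexForm_pow_six
  -- the origin contributes `1 / 0 = 0`, so it may be added to the sum
  have hzero : ∑' p : {p : ℤ × ℤ // p ≠ 0}, 1 / hexForm p ^ 6 = ∑' p, 1 / hexForm p ^ 6 :=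
    tsum_subtype_eq_of_support_subset (f := fun p => 1 / hexForm p ^ 6) (s := {p | p ≠ 0})
      fun p hp h0 => hp (by simp [h0, hexForm_zero])
  have htail : ∑' p : ↑(box : Set (ℤ × ℤ))ᶜ, 1 / hexForm p ^ 6 ≤ ∑' p, tailMajorant p :=
    (hF.subtype _).tsum_le_tsum (fun p => one_div_hexForm_pow_six_le_tailMajorant p.2)
      (summable_tailMajorant.subtype _) |>.trans
      (summable_tailMajorant.tsum_subtype_le _ _ tailMajorant_nonneg)
  change ∑' p : {p : ℤ × ℤ // p ≠ 0}, 1 / hexForm p ^ 6 ≤ 6.0099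
  rw [hzero, ← hF.sum_add_tsum_compl (s := box)]
  linarith [sum_box_le, tsum_tailMajorant_le]
end

section
/- For all real x with 0 ≤ x ≤ 4π and integers k ≥ 4, the Whittaker function satisfies M_{(k−2)/2,(k−1)/2}(x) ≤ e^{2π} x^{k/2}. -/
open Real

private lemma ascFactorial_mono_left {m n : ℕ} (h : m ≤ n) :
    ∀ j, m.ascFactorial j ≤ n.ascFactorial j
  | 0 => le_refl _
  | j + 1 => by
      rw [Nat.ascFactorial_succ, Nat.ascFactorial_succ]
      exact Nat.mul_le_mul (Nat.add_le_add_right h j) (ascFactorial_mono_left h j)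

private lemma factorial_le_ascPochhammer (k n : ℕ) (hk : 1 ≤ k) :
    (n.factorial : ℝ) ≤ (ascPochhammer ℝ n).eval (k : ℝ) := by
  rw [← ascPochhammer_eval_cast, ascPochhammer_nat_eq_ascFactorial]
  exact_mod_cast (Nat.one_ascFactorial n ▸ ascFactorial_mono_left hk n)

theorem whittakerM_bound (k : ℕ) (hk : 4 ≤ k) (x : ℝ) (hx0 : 0 ≤ x)
    (hx : x ≤ 4 * π) :
    whittakerM (((k : ℝ) - 2) / 2) (((k : ℝ) - 1) / 2) x
      ≤ Real.exp (2 * π) * x ^ ((k : ℝ) / 2) := by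
  have h1 : ((k : ℝ) - 1) / 2 - ((k : ℝ) - 2) / 2 + 1 / 2 = 1 := by ring
  have h2 : 2 * (((k : ℝ) - 1) / 2) + 1 = (k : ℝ) := by ring
  have h3 : ((k : ℝ) - 1) / 2 + 1 / 2 = (k : ℝ) / 2 := by ring
  rw [whittakerM, h1, h2, h3]
  -- bound the series
  have hpos : ∀ n : ℕ, (0 : ℝ) < (ascPochhammer ℝ n).eval (k : ℝ) :=
    fun n => ascPochhammer_pos n _ (by positivity)
  have hfac : ∀ n : ℕ, (n.factorial : ℝ) ≤ (ascPochhammer ℝ n).eval (k : ℝ) :=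
    fun n => factorial_le_ascPochhammer k n (by omega)
  have hterm : ∀ n : ℕ,
      (ascPochhammer ℝ n).eval 1 / (ascPochhammer ℝ n).eval (k : ℝ) * x ^ n / n.factorial
        ≤ x ^ n / n.factorial := by
    intro n
    rw [ascPochhammer_eval_one]
    have h4 : (n.factorial : ℝ) / (ascPochhammer ℝ n).eval (k : ℝ) ≤ 1 :=
      (div_le_one (hpos n)).mpr (hfac n)
    have h5 : (0 : ℝ) ≤ x ^ n / n.factorial := by positivity
    calc (n.factorial : ℝ) / (ascPochhammer ℝ n).eval (k : ℝ) * x ^ n / n.factorial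
        = ((n.factorial : ℝ) / (ascPochhammer ℝ n).eval (k : ℝ)) * (x ^ n / n.factorial) := by
          ring
      _ ≤ 1 * (x ^ n / n.factorial) := mul_le_mul_of_nonneg_right h4 h5
      _ = x ^ n / n.factorial := one_mul _
  have hterm_nonneg : ∀ n : ℕ,
      (0 : ℝ) ≤ (ascPochhammer ℝ n).eval 1 / (ascPochhammer ℝ n).eval (k : ℝ) * x ^ n
        / n.factorial := by
    intro n
    have := hpos n
    have h1' : (0 : ℝ) < (ascPochhammer ℝ n).eval 1 := ascPochhammer_pos n _ one_pos
    positivity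
  have hsum_exp : Summable (fun n : ℕ => x ^ n / (n.factorial : ℝ)) :=
    Real.summable_pow_div_factorial x
  have hsum : Summable (fun n : ℕ =>
      (ascPochhammer ℝ n).eval 1 / (ascPochhammer ℝ n).eval (k : ℝ) * x ^ n / n.factorial) :=
    Summable.of_nonneg_of_le hterm_nonneg hterm hsum_exp
  have hexp : (∑' n : ℕ, x ^ n / (n.factorial : ℝ)) = Real.exp x := by
    rw [Real.exp_eq_exp_ℝ, NormedSpace.exp_eq_tsum_div]
  have hle : (∑' n : ℕ, (ascPochhammer ℝ n).eval 1 / (ascPochhammer ℝ n).eval (k : ℝ) * x ^ n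
      / n.factorial) ≤ Real.exp x := by
    rw [← hexp]
    exact Summable.tsum_le_tsum hterm hsum hsum_exp
  have hS_nonneg : (0 : ℝ) ≤ ∑' n : ℕ,
      (ascPochhammer ℝ n).eval 1 / (ascPochhammer ℝ n).eval (k : ℝ) * x ^ n / n.factorial :=
    tsum_nonneg hterm_nonneg
  have hrpow : (0 : ℝ) ≤ x ^ ((k : ℝ) / 2) := Real.rpow_nonneg hx0 _
  calc Real.exp (-x / 2) * x ^ ((k : ℝ) / 2) * (∑' n : ℕ,
        (ascPochhammer ℝ n).eval 1 / (ascPochhammer ℝ n).eval (k : ℝ) * x ^ n / n.factorial)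
      ≤ Real.exp (-x / 2) * x ^ ((k : ℝ) / 2) * Real.exp x := by
        apply mul_le_mul_of_nonneg_left hle
        positivity
    _ = Real.exp (x / 2) * x ^ ((k : ℝ) / 2) := by
        rw [mul_comm (Real.exp (-x / 2)) _, mul_assoc, ← Real.exp_add]
        ring_nf
    _ ≤ Real.exp (2 * π) * x ^ ((k : ℝ) / 2) := by
        apply mul_le_mul_of_nonneg_right _ hrpow
        apply Real.exp_le_exp.mpr
        linarith
end
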